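/- With the hypotheses of the previous setting (𝒪 a reduced complete intersection algebroid curve in characteristic 0), the operator D extends to the total ring of fractions and maps the integral closure Õ of 𝒪 into Õ: D(Õ) ⊆ Õ. -/

import Mathlib

/-!
STATEMENT 7: With `𝒪 = k[[X₁,…,X_{n+1}]]/⟨f₁,…,f_n⟩` a reduced complete
intersection algebroid curve in characteristic `0` and `φ : 𝒪 ↪ Õ = ∏ᵢ k[[tᵢ]]`
its normalization, the operator `D` extends to the total ring of fractions by
`D(g/h) = (h·D(g) − g·D(h))/h²` and maps `Õ` into `Õ` : for `g/h ∈ Õ`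
(i.e. `v(g) ≥ v(h)` componentwise, `h` a non-zerodivisor), the element
`D(g/h) = (h·D(g) − g·D(h))/h²` lies in `Õ`, i.e. `φᵢ(h)²` divides
`φᵢ(h·D(g) − g·D(h))` in `k[[tᵢ]]` for every `i`.
-/

noncomputable section

open MvPowerSeries

variable {k : Type*} [Field k] {m : ℕ}

/-- Formal partial derivative of a multivariate power series with respect to
the `i`-th variable. -/
def mvPderiv (i : Fin m) (f : MvPowerSeries (Fin m) k) : MvPowerSeries (Fin m) k :=
  fun d => (d i + 1 : ℕ) • MvPowerSeries.coeff (d + Finsupp.single i 1) f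

/-- The module of Kähler differentials `Ω(R/I)` of an algebroid curve presented
as `k[[X₁,…,X_m]]/I`, in its standard finite presentation: the quotient of the
free module `(R/I)^m` (on the classes `dX₁,…,dX_m`) by the submodule generated
by the gradients of the elements of `I`. -/
def Omega (I : Ideal (MvPowerSeries (Fin m) k)) : Type _ :=
  (Fin m → MvPowerSeries (Fin m) k ⧸ I) ⧸
    Submodule.span (MvPowerSeries (Fin m) k ⧸ I)
      {v | ∃ g ∈ I, v = fun j => Ideal.Quotient.mk I (mvPderiv j g)}

instance (I : Ideal (MvPowerSeries (Fin m) k)) : AddCommGroup (Omega I) := by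
  unfold Omega; infer_instance

instance (I : Ideal (MvPowerSeries (Fin m) k)) :
    Module (MvPowerSeries (Fin m) k ⧸ I) (Omega I) := by
  unfold Omega; infer_instance

instance (I : Ideal (MvPowerSeries (Fin m) k)) : Module k (Omega I) :=
  Module.compHom _ (algebraMap k (MvPowerSeries (Fin m) k ⧸ I))

/-- The class of `g·dXⱼ` in `Omega I`. -/
def gdx (I : Ideal (MvPowerSeries (Fin m) k)) (g : MvPowerSeries (Fin m) k)
    (j : Fin m) : Omega I :=
  Submodule.Quotient.mk (Pi.single j (Ideal.Quotient.mk I g))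


/-- The operator `D` : `D(g)` is the determinant of the `(n+1)×(n+1)` matrix whose
first `n` rows are the gradients of `f₁,…,f_n` and whose last row is the
gradient of `g` (computed on representatives in `k[[X₁,…,X_{n+1}]]`). -/
def Ddet {n : ℕ} (f : Fin n → MvPowerSeries (Fin (n + 1)) k)
    (g : MvPowerSeries (Fin (n + 1)) k) : MvPowerSeries (Fin (n + 1)) k :=
  Matrix.det (Matrix.of (Fin.snoc (fun (i : Fin n) (j : Fin (n + 1)) => mvPderiv j (f i))
    (fun j => mvPderiv j g)))


namespace DdetAux

lemma coeff_mvPderiv (j : Fin m) (g : MvPowerSeries (Fin m) k) (d : Fin m →₀ ℕ) :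
    MvPowerSeries.coeff d (mvPderiv j g)
      = (d j + 1 : ℕ) • MvPowerSeries.coeff (d + Finsupp.single j 1) g := rfl

lemma sum_add_single (d : Fin m →₀ ℕ) (j : Fin m) :
    (∑ i, (d + Finsupp.single j 1 : Fin m →₀ ℕ) i) = (∑ i, d i) + 1 := by
  classical
  simp only [Finsupp.add_apply, Finset.sum_add_distrib]
  congr 1
  simp [Finsupp.single_apply]

lemma coeff_zero_of_X_pow_dvd {N M : ℕ} {w : PowerSeries k}
    (h : (PowerSeries.X : PowerSeries k) ^ N ∣ w) (hM : M < N) :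
    PowerSeries.coeff M w = 0 := by
  obtain ⟨t, rfl⟩ := h
  rw [PowerSeries.coeff_X_pow_mul', if_neg (by omega)]

lemma mvPderiv_coe (j : Fin m) (Q : MvPolynomial (Fin m) k) :
    mvPderiv j (Q : MvPowerSeries (Fin m) k) = ((MvPolynomial.pderiv j Q : MvPolynomial (Fin m) k) :
      MvPowerSeries (Fin m) k) := by
  classical
  induction Q using MvPolynomial.induction_on' with
  | add p q hp hq =>
      rw [MvPolynomial.coe_add, map_add, MvPolynomial.coe_add]
      ext d
      have h := coeff_mvPderiv j ((p : MvPowerSeries (Fin m) k) + (q : MvPowerSeries (Fin m) k)) d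
      rw [map_add, smul_add, ← coeff_mvPderiv, ← coeff_mvPderiv] at h
      rw [h, hp, hq, map_add]
  | monomial u a =>
      rw [MvPolynomial.coe_monomial, MvPolynomial.pderiv_monomial, MvPolynomial.coe_monomial]
      ext e
      rw [coeff_mvPderiv, MvPowerSeries.coeff_monomial, MvPowerSeries.coeff_monomial]
      by_cases hu : u j = 0
      · have h1 : u - Finsupp.single j 1 = u := by
          ext i
          rcases eq_or_ne i j with rfl | hij
          · simp [Finsupp.single_apply, hu]
          · simp [Finsupp.single_apply, hij.symm]
        rw [h1]
        have h2 : e + Finsupp.single j 1 ≠ u := by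
          intro h
          apply_fun (fun w => w j) at h
          simp [Finsupp.single_apply] at h
          omega
        rw [if_neg h2]
        split_ifs with h3
        · simp [hu]
        · simp
      · by_cases he : e = u - Finsupp.single j 1
        · have hle : Finsupp.single j 1 ≤ u := by
            rw [Finsupp.single_le_iff]; omega
          have h4 : e + Finsupp.single j 1 = u := by
            rw [he, tsub_add_cancel_of_le hle]
          rw [if_pos h4, if_pos he]
          have h5 : e j + 1 = u j := by
            apply_fun (fun w => w j) at h4
            simpa [Finsupp.single_apply] using h4
          rw [← h5, nsmul_eq_mul]
          push_cast
          ring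
        · have h6 : e + Finsupp.single j 1 ≠ u := by
            intro h
            exact he (by rw [← h]; simp)
          rw [if_neg h6, if_neg he, smul_zero]

lemma aeval_chain (x : Fin m → PowerSeries k) (P : MvPolynomial (Fin m) k) :
    (PowerSeries.derivative k) (MvPolynomial.aeval x P)
      = ∑ j, MvPolynomial.aeval x (MvPolynomial.pderiv j P) * (PowerSeries.derivative k) (x j) := by
  classical
  induction P using MvPolynomial.induction_on with
  | C a =>
      rw [MvPolynomial.aeval_C, PowerSeries.algebraMap_apply]
      simp [Algebra.algebraMap_self_apply]
  | add p q hp hq =>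
      simp only [map_add, hp, hq, add_mul, Finset.sum_add_distrib]
  | mul_X p j hp =>
      rw [map_mul, MvPolynomial.aeval_X, Derivation.leibniz, smul_eq_mul, smul_eq_mul, hp]
      have h : ∀ l : Fin m, MvPolynomial.aeval x (MvPolynomial.pderiv l (p * MvPolynomial.X j))
          * (PowerSeries.derivative k) (x l)
          = (MvPolynomial.aeval x (MvPolynomial.pderiv l p) * (PowerSeries.derivative k) (x l))
              * x j
            + (if l = j then MvPolynomial.aeval x p * (PowerSeries.derivative k) (x j) else 0) := by
        intro l
        rw [MvPolynomial.pderiv_mul]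
        rcases eq_or_ne l j with rfl | hlj
        · simp [MvPolynomial.aeval_X]
          ring
        · simp [MvPolynomial.pderiv_X_of_ne (Ne.symm hlj), hlj, MvPolynomial.aeval_X]
          ring
      rw [Finset.sum_congr rfl (fun l _ => h l), Finset.sum_add_distrib]
      rw [← Finset.sum_mul, Finset.sum_ite_eq' Finset.univ j
        (fun _ => MvPolynomial.aeval x p * (PowerSeries.derivative k) (x j))]
      simp only [Finset.mem_univ, if_pos]
      ring

variable (ψ : MvPowerSeries (Fin m) k →ₐ[k] PowerSeries k)

lemma psi_X_const (j : Fin m) :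
    PowerSeries.constantCoeff (ψ (MvPowerSeries.X j)) = 0 := by
  set c := PowerSeries.constantCoeff (ψ (MvPowerSeries.X j)) with hc
  by_contra h
  have hunit : IsUnit ((MvPowerSeries.X j : MvPowerSeries (Fin m) k)
      - MvPowerSeries.C c) := by
    rw [MvPowerSeries.isUnit_iff_constantCoeff]
    simp [h]
  have h2 := hunit.map ψ
  rw [map_sub] at h2
  have hCc : ψ (MvPowerSeries.C c) = PowerSeries.C c := by
    rw [MvPowerSeries.c_eq_algebraMap, AlgHom.commutes]
    rfl
  rw [hCc, PowerSeries.isUnit_iff_constantCoeff, map_sub, ← hc,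
    PowerSeries.constantCoeff_C, sub_self] at h2
  exact (not_isUnit_zero h2).elim

lemma psi_dvd (N : ℕ) (g : MvPowerSeries (Fin m) k)
    (hg : ∀ d : Fin m →₀ ℕ, (∑ j, d j) < N → MvPowerSeries.coeff d g = 0) :
    (PowerSeries.X : PowerSeries k) ^ N ∣ ψ g := by
  classical
  induction N generalizing g with
  | zero => exact one_dvd _
  | succ N IH =>
    set c : Fin m → MvPowerSeries (Fin m) k := fun j d =>
      if (d + Finsupp.single j 1).support.min = (j : WithTop (Fin m)) then
        MvPowerSeries.coeff (d + Finsupp.single j 1) g else 0 with hcdef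
    have hterm : ∀ (j : Fin m) (d : Fin m →₀ ℕ),
        MvPowerSeries.coeff d (MvPowerSeries.X j * c j) =
          if Finsupp.single j 1 ≤ d then
            (if d.support.min = (j : WithTop (Fin m)) then MvPowerSeries.coeff d g else 0)
          else 0 := by
      intro j d
      rw [MvPowerSeries.X, MvPowerSeries.coeff_monomial_mul]
      by_cases h1 : Finsupp.single j 1 ≤ d
      · rw [if_pos h1, if_pos h1, one_mul]
        show (c j) (d - Finsupp.single j 1) = _
        rw [hcdef]
        simp only [tsub_add_cancel_of_le h1]
      · rw [if_neg h1, if_neg h1]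
    have hdecomp : g = ∑ j, MvPowerSeries.X j * c j := by
      ext d
      rw [map_sum]
      by_cases hd : d = 0
      · subst hd
        have h0 : ∀ j : Fin m, MvPowerSeries.coeff 0 (MvPowerSeries.X j * c j) = 0 := by
          intro j
          rw [hterm]
          have : ¬ Finsupp.single j 1 ≤ (0 : Fin m →₀ ℕ) := by
            simp [Finsupp.single_le_iff]
          rw [if_neg this]
        rw [Finset.sum_eq_zero fun j _ => h0 j]
        exact hg 0 (by simp)
      · have hne : d.support.Nonempty := Finsupp.support_nonempty_iff.mpr hd
        set j₀ := d.support.min' hne with hj₀def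
        have hmin : d.support.min = (j₀ : WithTop (Fin m)) := (Finset.coe_min' hne).symm
        rw [Finset.sum_eq_single j₀]
        · rw [hterm, if_pos, if_pos hmin]
          rw [Finsupp.single_le_iff]
          have := Finset.min'_mem _ hne
          rw [Finsupp.mem_support_iff] at this
          exact Nat.one_le_iff_ne_zero.mpr this
        · intro j _ hj
          rw [hterm]
          split_ifs with h1 h2
          · exact absurd (WithTop.coe_injective (hmin.symm.trans h2)).symm hj
          · rfl
          · rfl
        · intro h
          exact absurd (Finset.mem_univ j₀) h
    have hc_small : ∀ j, ∀ e : Fin m →₀ ℕ, (∑ i, e i) < N →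
        MvPowerSeries.coeff e (c j) = 0 := by
      intro j e he
      have hce : MvPowerSeries.coeff e (c j) = (c j) e := rfl
      rw [hce, hcdef]
      have hsum : (∑ i, (e + Finsupp.single j 1 : Fin m →₀ ℕ) i) = (∑ i, e i) + 1 :=
        sum_add_single e j
      have := hg (e + Finsupp.single j 1) (by omega)
      simp only []
      split_ifs <;> simp [this]
    calc (PowerSeries.X : PowerSeries k) ^ (N+1) ∣
        ∑ j, ψ (MvPowerSeries.X j) * ψ (c j) := by
          apply Finset.dvd_sum
          intro j _
          rw [pow_succ']
          exact mul_dvd_mul (PowerSeries.X_dvd_iff.mpr (psi_X_const ψ j)) (IH (c j) (hc_small j))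
      _ = ψ g := by rw [hdecomp, map_sum]; simp [map_mul]

lemma psi_coe (P : MvPolynomial (Fin m) k) :
    ψ (P : MvPowerSeries (Fin m) k)
      = MvPolynomial.aeval (fun j => ψ (MvPowerSeries.X j)) P := by
  induction P using MvPolynomial.induction_on with
  | C a =>
      rw [MvPolynomial.coe_C, MvPowerSeries.c_eq_algebraMap, AlgHom.commutes,
        MvPolynomial.aeval_C]
  | add p q hp hq => rw [MvPolynomial.coe_add, map_add, map_add, hp, hq]
  | mul_X p j hp => rw [MvPolynomial.coe_mul, MvPolynomial.coe_X, map_mul, map_mul, hp,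
      MvPolynomial.aeval_X]

lemma psi_chain (hm : 0 < m)
    (g : MvPowerSeries (Fin m) k) :
    (PowerSeries.derivative k) (ψ g)
      = ∑ j, ψ (mvPderiv j g) * (PowerSeries.derivative k) (ψ (MvPowerSeries.X j)) := by
  classical
  ext M
  set B := M + 2 with hBdef
  set b : Fin m →₀ ℕ := Finsupp.equivFunOnFinite.symm (fun _ => B) with hbdef
  have hb : ∀ i, b i = B := fun i => rfl
  set P := MvPowerSeries.trunc k b g with hPdef
  have hlt : ∀ d : Fin m →₀ ℕ, (∑ i, d i) < B → d < b := by
    intro d hd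
    have hle : d ≤ b := by
      rw [Finsupp.le_iff]
      intro i _
      rw [hb]
      calc d i ≤ ∑ j, d j := Finset.single_le_sum (fun _ _ => Nat.zero_le _) (Finset.mem_univ i)
        _ ≤ B := le_of_lt hd
    refine lt_of_le_of_ne hle ?_
    intro h
    have hsum : (∑ i, d i) = ∑ i : Fin m, B := by
      rw [h]; exact Finset.sum_congr rfl fun i _ => hb i
    rw [Finset.sum_const, Finset.card_univ, Fintype.card_fin, smul_eq_mul] at hsum
    nlinarith
  have hcoeP : ∀ d : Fin m →₀ ℕ, (∑ i, d i) < B →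
      MvPowerSeries.coeff d (P : MvPowerSeries (Fin m) k) = MvPowerSeries.coeff d g := by
    intro d hd
    rw [MvPolynomial.coeff_coe, MvPowerSeries.coeff_trunc, if_pos (hlt d hd)]
  have h1 : (PowerSeries.X : PowerSeries k) ^ B ∣ ψ (g - (P : MvPowerSeries (Fin m) k)) := by
    apply psi_dvd ψ B
    intro d hd
    rw [map_sub, hcoeP d hd, sub_self]
  obtain ⟨w, hw⟩ := h1
  rw [map_sub] at hw
  have hψg : ψ g = ψ (P : MvPowerSeries (Fin m) k) + (PowerSeries.X : PowerSeries k) ^ B * w := by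
    rw [← hw]; ring
  have h2 : ∀ j, (PowerSeries.X : PowerSeries k) ^ (M + 1) ∣
      (ψ (mvPderiv j g) - MvPolynomial.aeval (fun l => ψ (MvPowerSeries.X l))
        (MvPolynomial.pderiv j P)) := by
    intro j
    rw [← psi_coe ψ, ← mvPderiv_coe j P, ← map_sub]
    apply psi_dvd ψ (M+1)
    intro d hd
    rw [map_sub, coeff_mvPderiv, coeff_mvPderiv, ← smul_sub]
    have hs : (∑ i, (d + Finsupp.single j 1 : Fin m →₀ ℕ) i) < B := by
      rw [sum_add_single]; omega
    rw [hcoeP _ hs, sub_self, smul_zero]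
  have e1 : PowerSeries.coeff M ((PowerSeries.derivative k) (ψ g))
      = PowerSeries.coeff M ((PowerSeries.derivative k)
          (MvPolynomial.aeval (fun l => ψ (MvPowerSeries.X l)) P)) := by
    rw [hψg, map_add, map_add, psi_coe ψ]
    have hd0 : (PowerSeries.X : PowerSeries k) ^ (M+1) ∣
        (PowerSeries.derivative k) ((PowerSeries.X : PowerSeries k) ^ B * w) := by
      rw [Derivation.leibniz, Derivation.leibniz_pow, PowerSeries.derivative_X,
        smul_eq_mul, smul_eq_mul, nsmul_eq_mul, smul_eq_mul]
      apply dvd_add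
      · apply Dvd.dvd.mul_right
        exact pow_dvd_pow _ (by omega)
      · apply Dvd.dvd.mul_left
        apply Dvd.dvd.mul_left
        have hB1 : B - 1 = M + 1 := by omega
        rw [hB1]
        exact dvd_mul_right _ _
    rw [coeff_zero_of_X_pow_dvd (M := M) hd0 (by omega), add_zero]
  have e2 : PowerSeries.coeff M (∑ j, ψ (mvPderiv j g)
        * (PowerSeries.derivative k) (ψ (MvPowerSeries.X j)))
      = PowerSeries.coeff M (∑ j, MvPolynomial.aeval (fun l => ψ (MvPowerSeries.X l))
          (MvPolynomial.pderiv j P) * (PowerSeries.derivative k) (ψ (MvPowerSeries.X j))) := by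
    rw [map_sum, map_sum]
    apply Finset.sum_congr rfl
    intro j _
    have hdvd : (PowerSeries.X : PowerSeries k) ^ (M+1) ∣
        (ψ (mvPderiv j g) * (PowerSeries.derivative k) (ψ (MvPowerSeries.X j))
          - MvPolynomial.aeval (fun l => ψ (MvPowerSeries.X l)) (MvPolynomial.pderiv j P)
            * (PowerSeries.derivative k) (ψ (MvPowerSeries.X j))) := by
      rw [← sub_mul]
      exact (h2 j).mul_right _
    have h0 := coeff_zero_of_X_pow_dvd (M := M) hdvd (by omega)
    rw [map_sub] at h0
    exact sub_eq_zero.mp h0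
  rw [e1, aeval_chain]
  exact e2.symm

lemma order_derivative [CharZero k] {g : PowerSeries k} {M : ℕ}
    (hg : g.order = (M : ℕ∞)) (hM : 1 ≤ M) :
    ((PowerSeries.derivative k) g).order = ((M - 1 : ℕ) : ℕ∞) := by
  rw [PowerSeries.order_eq_nat] at hg ⊢
  obtain ⟨h1, h2⟩ := hg
  constructor
  · rw [PowerSeries.coeff_derivative]
    have hM1 : M - 1 + 1 = M := by omega
    rw [hM1]
    have h3 : ((M - 1 : ℕ) : k) + 1 ≠ 0 := Nat.cast_add_one_ne_zero (M-1)
    exact mul_ne_zero h1 h3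
  · intro i hi
    rw [PowerSeries.coeff_derivative, h2 (i+1) (by omega), zero_mul]

lemma dvd_of_order_le {u g : PowerSeries k} (h : u.order ≤ g.order) : u ∣ g := by
  by_cases hg : g = 0
  · simp [hg]
  have hu : u ≠ 0 := by
    intro h0
    rw [h0, PowerSeries.order_zero, top_le_iff, PowerSeries.order_eq_top] at h
    exact hg h
  set hu' := PowerSeries.order_finite_iff_ne_zero.mpr hu
  set hg' := PowerSeries.order_finite_iff_ne_zero.mpr hg
  set p := u.order.lift hu' with hpdef
  set q := g.order.lift hg' with hqdef
  have hcp : (p : ℕ∞) = u.order := by simp [hpdef]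
  have hcq : (q : ℕ∞) = g.order := by simp [hqdef]
  have hpq : p ≤ q := by
    have : (p : ℕ∞) ≤ (q : ℕ∞) := by rw [hcp, hcq]; exact h
    exact_mod_cast this
  refine ⟨(PowerSeries.Inv_divided_by_X_pow_order hu) * ((PowerSeries.X : PowerSeries k)^(q-p)
    * PowerSeries.divXPowOrder g), ?_⟩
  have key : PowerSeries.divXPowOrder u * PowerSeries.Inv_divided_by_X_pow_order hu
      = 1 := PowerSeries.Inv_divided_by_X_pow_order_rightInv hu
  have hXg : (PowerSeries.X : PowerSeries k)^q * PowerSeries.divXPowOrder g = g := by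
    have hqt : q = g.order.toNat := by rw [← hcq]; simp
    rw [hqt]; exact PowerSeries.X_pow_order_mul_divXPowOrder
  have hXu : (PowerSeries.X : PowerSeries k)^p * PowerSeries.divXPowOrder u = u := by
    have hpt : p = u.order.toNat := by rw [← hcp]; simp
    rw [hpt]; exact PowerSeries.X_pow_order_mul_divXPowOrder
  calc g = (PowerSeries.X : PowerSeries k)^q * PowerSeries.divXPowOrder g :=
        hXg.symm
    _ = ((PowerSeries.X : PowerSeries k)^p * PowerSeries.divXPowOrder u) *
        ((PowerSeries.Inv_divided_by_X_pow_order hu) * ((PowerSeries.X : PowerSeries k)^(q-p)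
          * PowerSeries.divXPowOrder g)) := by
        have hXq : (PowerSeries.X : PowerSeries k)^q
            = (PowerSeries.X : PowerSeries k)^p * (PowerSeries.X : PowerSeries k)^(q-p) := by
          rw [← pow_add]; congr 1; omega
        rw [hXq]
        linear_combination (-((PowerSeries.X : PowerSeries k)^p
          * (PowerSeries.X : PowerSeries k)^(q-p)
          * PowerSeries.divXPowOrder g)) * key
    _ = u * ((PowerSeries.Inv_divided_by_X_pow_order hu) * ((PowerSeries.X : PowerSeries k)^(q-p)
          * PowerSeries.divXPowOrder g)) := by
        rw [hXu]

end DdetAux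


theorem Ddet_maps_normalization_to_itself [IsAlgClosed k] [CharZero k]
    {n r : ℕ} (f : Fin n → MvPowerSeries (Fin (n + 1)) k)
    (A : Ideal (MvPowerSeries (Fin (n + 1)) k)) (hA : A = Ideal.span (Set.range f))
    (hred : IsReduced (MvPowerSeries (Fin (n + 1)) k ⧸ A))
    (hdim : ringKrullDim (MvPowerSeries (Fin (n + 1)) k ⧸ A) = 1)
    -- φ : 𝒪 → ∏ᵢ k[[tᵢ]] realizes the normalization of 𝒪:
    (φ : (MvPowerSeries (Fin (n + 1)) k ⧸ A) →ₐ[k] (Fin r → PowerSeries k))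
    (hφinj : Function.Injective φ)
    (hint : ∀ y : Fin r → PowerSeries k, φ.toRingHom.IsIntegralElem y)
    (hfrac : ∀ i : Fin r, ∃ a b : MvPowerSeries (Fin (n + 1)) k ⧸ A,
      φ b i ≠ 0 ∧ φ a i = PowerSeries.X * φ b i) :
    ∀ G H : MvPowerSeries (Fin (n + 1)) k,
      Ideal.Quotient.mk A H ∈ nonZeroDivisors (MvPowerSeries (Fin (n + 1)) k ⧸ A) →
      (∀ i, (φ (Ideal.Quotient.mk A H) i).order ≤
        (φ (Ideal.Quotient.mk A G) i).order) →
      ∀ i, (φ (Ideal.Quotient.mk A H) i) ^ 2 ∣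
        φ (Ideal.Quotient.mk A (H * Ddet f G - G * Ddet f H)) i := by
  classical
  intro G H _hH hord i
  set ψ : MvPowerSeries (Fin (n+1)) k →ₐ[k] PowerSeries k :=
    ((Pi.evalAlgHom k (fun _ : Fin r => PowerSeries k) i).comp φ).comp
      (Ideal.Quotient.mkₐ k A) with hψdef
  have hψap : ∀ w : MvPowerSeries (Fin (n+1)) k,
      ψ w = φ (Ideal.Quotient.mk A w) i := fun w => rfl
  have hCR : ∀ w, (PowerSeries.derivative k) (ψ w)
      = ∑ j, ψ (mvPderiv j w) * (PowerSeries.derivative k) (ψ (MvPowerSeries.X j)) :=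
    DdetAux.psi_chain ψ (Nat.succ_pos n)
  have hfl : ∀ l, ψ (f l) = 0 := by
    intro l
    rw [hψap]
    have h0 : Ideal.Quotient.mk A (f l) = 0 := by
      rw [Ideal.Quotient.eq_zero_iff_mem, hA]
      exact Ideal.subset_span ⟨l, rfl⟩
    rw [h0, map_zero]
    rfl
  -- the target rewriting
  have hrw : φ (Ideal.Quotient.mk A (H * Ddet f G - G * Ddet f H)) i
      = ψ H * ψ (Ddet f G) - ψ G * ψ (Ddet f H) := by
    simp only [hψap, map_sub, map_mul, Pi.sub_apply, Pi.mul_apply]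
  have hgoal : ∀ (w : PowerSeries k),
      ψ H * ψ (Ddet f G) - ψ G * ψ (Ddet f H) = (ψ H)^2 * w →
      (φ (Ideal.Quotient.mk A H) i) ^ 2 ∣
        φ (Ideal.Quotient.mk A (H * Ddet f G - G * Ddet f H)) i := by
    intro w hw
    rw [hrw, ← hψap H, hw]
    exact Dvd.intro _ rfl
  -- fraction witnesses
  obtain ⟨aq, bq, hb0, hab⟩ := hfrac i
  obtain ⟨A₀, hA₀⟩ := Ideal.Quotient.mk_surjective (I := A) aq
  obtain ⟨B₀, hB₀⟩ := Ideal.Quotient.mk_surjective (I := A) bq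
  have hψB₀ : ψ B₀ ≠ 0 := by rw [hψap, hB₀]; exact hb0
  have hψA₀ : ψ A₀ = PowerSeries.X * ψ B₀ := by
    rw [hψap, hψap, hA₀, hB₀]; exact hab
  by_cases hH0 : ψ H = 0
  · -- degenerate branch : both G and H vanish on this branch
    have hG0 : ψ G = 0 := by
      rw [← PowerSeries.order_eq_top]
      have h1 := hord i
      rw [← hψap H, ← hψap G, hH0, PowerSeries.order_zero, top_le_iff] at h1
      exact h1
    exact hgoal 0 (by rw [hH0, hG0]; ring)
  -- main case
  -- the matrix of the situation
  set Mat : MvPowerSeries (Fin (n+1)) k → Matrix (Fin (n+1)) (Fin (n+1)) (PowerSeries k) :=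
    fun w => (Matrix.of (Fin.snoc (fun (l : Fin n) (j : Fin (n+1)) => mvPderiv j (f l))
      (fun j => mvPderiv j w))).map ψ with hMatdef
  have hdet : ∀ w, ψ (Ddet f w) = (Mat w).det := by
    intro w
    rw [Ddet]
    exact RingHom.map_det ψ.toRingHom _
  set dX : Fin (n+1) → PowerSeries k :=
    fun j => (PowerSeries.derivative k) (ψ (MvPowerSeries.X j)) with hdXdef
  have hMul : ∀ w, Matrix.mulVec (Mat w) dX
      = Pi.single (Fin.last n) ((PowerSeries.derivative k) (ψ w)) := by
    intro w
    funext i'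
    induction i' using Fin.lastCases with
    | last =>
        have : (Matrix.mulVec (Mat w) dX) (Fin.last n) = ∑ j, ψ (mvPderiv j w) * dX j := by
          simp only [Matrix.mulVec, dotProduct, hMatdef, Matrix.map_apply, Matrix.of_apply,
            Fin.snoc_last]
        rw [this, Pi.single_eq_same, hCR w]
    | cast l =>
        have : (Matrix.mulVec (Mat w) dX) (Fin.castSucc l) = ∑ j, ψ (mvPderiv j (f l)) * dX j := by
          simp only [Matrix.mulVec, dotProduct, hMatdef, Matrix.map_apply, Matrix.of_apply,
            Fin.snoc_castSucc]
        rw [this, ← hCR (f l), hfl l, map_zero,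
          Pi.single_eq_of_ne (Fin.castSucc_lt_last l).ne]
  have hCram : ∀ w, ∀ j, (Mat w).det * dX j
      = (PowerSeries.derivative k) (ψ w) * (Mat w).adjugate j (Fin.last n) := by
    intro w j
    have h1 : Matrix.mulVec (Mat w).adjugate (Matrix.mulVec (Mat w) dX) = Matrix.mulVec ((Mat w).adjugate * (Mat w)) dX :=
      Matrix.mulVec_mulVec dX (Mat w).adjugate (Mat w)
    rw [hMul, Matrix.adjugate_mul, Matrix.mulVec_single, Matrix.smul_mulVec,
      Matrix.one_mulVec] at h1
    have h2 := congrFun h1 j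
    simp only [Pi.smul_apply, smul_eq_mul] at h2
    rw [← h2]
    rw [op_smul_eq_mul]; exact mul_comm _ _
  have hadj : ∀ w j, (Mat w).adjugate j (Fin.last n) = (Mat 0).adjugate j (Fin.last n) := by
    intro w j
    rw [Matrix.adjugate_apply, Matrix.adjugate_apply]
    congr 1
    ext i' j'
    rw [Matrix.updateRow_apply, Matrix.updateRow_apply]
    split_ifs with h
    · rfl
    · obtain ⟨l, rfl⟩ := Fin.exists_castSucc_eq.2 h
      simp only [hMatdef, Matrix.map_apply, Matrix.of_apply, Fin.snoc_castSucc]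
  -- choice of a coordinate with nonvanishing derivative
  have hjex : ∃ j, dX j ≠ 0 := by
    by_contra hall
    push_neg at hall
    have hzero : ∀ w : MvPowerSeries (Fin (n+1)) k,
        (PowerSeries.derivative k) (ψ w) = 0 := by
      intro w
      rw [hCR w]
      apply Finset.sum_eq_zero
      intro j _
      rw [show (PowerSeries.derivative k) (ψ (MvPowerSeries.X j)) = dX j from rfl,
        hall j, mul_zero]
    have h1 := hzero A₀
    rw [hψA₀, Derivation.leibniz, smul_eq_mul, smul_eq_mul, PowerSeries.derivative_X,
      hzero B₀, mul_zero, mul_one, zero_add] at h1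
    exact hψB₀ h1
  obtain ⟨j₀, hj₀⟩ := hjex
  set u := dX j₀ with hudef
  set a := (Mat 0).adjugate j₀ (Fin.last n) with hadef
  have hkey : ∀ w, ψ (Ddet f w) * u = (PowerSeries.derivative k) (ψ w) * a := by
    intro w
    rw [hdet, hudef, hCram w j₀, hadj w j₀]
  by_cases ha0 : a = 0
  · -- degenerate : the D operator vanishes identically on this branch
    have hz : ∀ w, ψ (Ddet f w) = 0 := by
      intro w
      have h1 := hkey w
      rw [ha0, mul_zero] at h1
      exact (mul_eq_zero.mp h1).resolve_right hj₀
    exact hgoal 0 (by rw [hz G, hz H]; ring)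
  -- main case : prove u ∣ a by the Seidenberg-style bootstrapping argument
  have hua : u ∣ a := by
    by_contra hnd
    have hqlt : a.order < u.order := by
      by_contra hle
      push_neg at hle
      exact hnd (DdetAux.dvd_of_order_le hle)
    obtain ⟨q, hq⟩ : ∃ q : ℕ, a.order = (q : ℕ∞) := by
      have h' : a.order ≠ ⊤ := by simpa [PowerSeries.order_eq_top] using ha0
      obtain ⟨q, hq⟩ := WithTop.ne_top_iff_exists.mp h'
      exact ⟨q, hq.symm⟩
    obtain ⟨p, hp⟩ : ∃ p : ℕ, u.order = (p : ℕ∞) := by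
      have h' : u.order ≠ ⊤ := by simpa [PowerSeries.order_eq_top] using hj₀
      obtain ⟨p, hp⟩ := WithTop.ne_top_iff_exists.mp h'
      exact ⟨p, hp.symm⟩
    have hqp : q < p := by
      rw [hq, hp] at hqlt
      exact_mod_cast hqlt
    set s := p - q with hsdef
    have hs1 : 1 ≤ s := by omega
    have key : ∀ M : ℕ, ∀ w : MvPowerSeries (Fin (n+1)) k,
        (ψ w).order = (M : ℕ∞) → 1 ≤ M → ¬ ((s+1) ∣ M) → False := by
      intro M
      induction M using Nat.strong_induction_on with
      | _ M IH =>
        intro w hw hM1 hMd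
        have hd : ((PowerSeries.derivative k) (ψ w)).order = ((M-1 : ℕ) : ℕ∞) :=
          DdetAux.order_derivative hw hM1
        have hdne : (PowerSeries.derivative k) (ψ w) ≠ 0 := by
          intro h0
          rw [h0, PowerSeries.order_zero] at hd
          exact (WithTop.top_ne_coe hd).elim
        have hrhs : (PowerSeries.derivative k) (ψ w) * a ≠ 0 := mul_ne_zero hdne ha0
        have hlhs := hkey w
        have hDne : ψ (Ddet f w) ≠ 0 := by
          intro h0
          rw [h0, zero_mul] at hlhs
          exact hrhs hlhs.symm
        obtain ⟨M', hM'⟩ : ∃ M' : ℕ, (ψ (Ddet f w)).order = (M' : ℕ∞) := by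
          have h' : (ψ (Ddet f w)).order ≠ ⊤ := by simpa [PowerSeries.order_eq_top] using hDne
          obtain ⟨M', hM'⟩ := WithTop.ne_top_iff_exists.mp h'
          exact ⟨M', hM'.symm⟩
        have horder : (ψ (Ddet f w)).order + u.order
            = ((PowerSeries.derivative k) (ψ w)).order + a.order := by
          rw [← PowerSeries.order_mul, ← PowerSeries.order_mul, hlhs]
        rw [hM', hp, hd, hq] at horder
        have hnat : M' + p = (M-1) + q := by exact_mod_cast horder
        have hM'e : M' + s + 1 = M := by omega
        have hM'1 : 1 ≤ M' := by
          rcases Nat.eq_zero_or_pos M' with h0 | h1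
          · exact absurd ⟨1, by omega⟩ hMd
          · exact h1
        have hM'd : ¬ ((s+1) ∣ M') := by
          rintro ⟨c, hc⟩
          refine hMd ⟨c+1, ?_⟩
          rw [Nat.mul_add, ← hc, Nat.mul_one]
          omega
        exact IH M' (by omega) (Ddet f w) hM' hM'1 hM'd
    obtain ⟨β, hβ⟩ : ∃ β : ℕ, (ψ B₀).order = (β : ℕ∞) := by
      have h' : (ψ B₀).order ≠ ⊤ := by simpa [PowerSeries.order_eq_top] using hψB₀
      obtain ⟨β, hβ⟩ := WithTop.ne_top_iff_exists.mp h'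
      exact ⟨β, hβ.symm⟩
    have hA₀o : (ψ A₀).order = ((β+1 : ℕ) : ℕ∞) := by
      rw [hψA₀, PowerSeries.order_mul, PowerSeries.order_X, hβ]
      push_cast
      ring
    by_cases hdivβ : (s+1) ∣ (β+1)
    · have hβ1 : 1 ≤ β := by
        by_contra hcon
        push_neg at hcon
        interval_cases β
        · have := Nat.le_of_dvd one_pos hdivβ
          omega
      have hβd : ¬ ((s+1) ∣ β) := by
        intro hdd
        have h1 : (s+1) ∣ 1 := by
          have := Nat.dvd_sub hdivβ hdd
          simpa using this
        have := Nat.le_of_dvd one_pos h1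
        omega
      exact key β B₀ hβ hβ1 hβd
    · exact key (β+1) A₀ hA₀o (by omega) hdivβ
  -- conclusion : the quotient rule
  obtain ⟨μ, hμ⟩ := hua
  have hHG : ψ H ∣ ψ G := by
    apply DdetAux.dvd_of_order_le
    rw [hψap H, hψap G]
    exact hord i
  obtain ⟨qS, hqS⟩ := hHG
  have e1 := hkey G
  have e2 := hkey H
  have e3 : (PowerSeries.derivative k) (ψ G)
      = ψ H * (PowerSeries.derivative k) qS + qS * (PowerSeries.derivative k) (ψ H) := by
    rw [hqS, Derivation.leibniz, smul_eq_mul, smul_eq_mul]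
  have hfinal : (ψ H * ψ (Ddet f G) - ψ G * ψ (Ddet f H)) * u
      = ((ψ H)^2 * ((PowerSeries.derivative k) qS * μ)) * u := by
    calc (ψ H * ψ (Ddet f G) - ψ G * ψ (Ddet f H)) * u
        = ψ H * (ψ (Ddet f G) * u) - ψ G * (ψ (Ddet f H) * u) := by ring
      _ = ψ H * ((PowerSeries.derivative k) (ψ G) * a)
          - ψ G * ((PowerSeries.derivative k) (ψ H) * a) := by rw [e1, e2]
      _ = ((ψ H)^2 * ((PowerSeries.derivative k) qS * μ)) * u := by
          rw [e3, hqS, hμ]; ring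
  exact hgoal ((PowerSeries.derivative k) qS * μ) (mul_right_cancel₀ hj₀ hfinal)


end
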